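/- Isospectral factorization underlying the L1 family: with ξ_{k,m}(x) = L_m^k(-x), A^I_{k,m}(y) = ξ_{k,m}·y' - ξ_{k+1,m}·y, and B^I_{k,m}(y) = (x·y' + (1+k)·y)/ξ_{k,m}, the operator identity L_k = B^I_{k,m} ∘ A^I_{k,m} + (k+m+1) holds, where L_k(y) = x·y'' + (k+1-x)·y'. -/

import Mathlib

/-!
Write `ξ_k = xi k m`. The derivative of `ξ_k` is `ξ_{k+1} - ξ_k` (the contiguous relation
`L_m^{k+1} - L_m^k = -(L_m^k)'`, read at `-x`), and `x ξ_{k+1}' + (k+1) ξ_{k+1} = (k+m+1) ξ_k`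
(the Euler-type relation `t (L_m^{k+1})' + (k+1) L_m^{k+1} = (k+m+1) L_m^k`). Expanding
`x (A y)' + (1+k) A y` with the first relation, the `ξ_{k+1} y'` terms cancel and the second
relation turns the `y` terms into `-(k+m+1) ξ_k y`, leaving `ξ_k · (x y'' + (k+1-x) y' - (k+m+1) y)`.
Both relations are checked coefficientwise, via rising-factorial shifts.
-/

/-- Associated Laguerre polynomial L_n^k(x). -/
noncomputable def lag (n : ℕ) (k : ℝ) (x : ℝ) : ℝ :=
  ∑ i ∈ Finset.range (n + 1),
    (-1 : ℝ) ^ i * (∏ j ∈ Finset.range (n - i), (k + (i : ℝ) + 1 + (j : ℝ))) /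
      (Nat.factorial (n - i) : ℝ) * x ^ i / (Nat.factorial i : ℝ)

/-- Laguerre polynomial with integer index, zero for negative index. -/
noncomputable def lagZ (j : ℤ) (k : ℝ) (x : ℝ) : ℝ :=
  if 0 ≤ j then lag j.toNat k x else 0

/-- xi_{k,m}(x) = L_m^k(-x). -/
noncomputable def xi (k : ℝ) (m : ℕ) (x : ℝ) : ℝ := lag m k (-x)

/-- eta_{k,m}(x) = L_m^{-k}(x). -/
noncomputable def eta (k : ℝ) (m : ℕ) (x : ℝ) : ℝ := lag m (-k) x

open Finset

noncomputable def lagCoeff (n : ℕ) (k : ℝ) (i : ℕ) : ℝ :=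
  (-1 : ℝ) ^ i * (∏ j ∈ range (n - i), (k + (i : ℝ) + 1 + (j : ℝ))) /
    (Nat.factorial (n - i) : ℝ) / (Nat.factorial i : ℝ)

lemma lag_eq_sum_lagCoeff (n : ℕ) (k x : ℝ) :
    lag n k x = ∑ i ∈ range (n + 1), lagCoeff n k i * x ^ i :=
  sum_congr rfl fun _ _ => by unfold lagCoeff; ring

noncomputable def lagDeriv (n : ℕ) (k x : ℝ) : ℝ :=
  ∑ i ∈ range (n + 1), lagCoeff n k i * ((i : ℝ) * x ^ (i - 1))

lemma hasDerivAt_lag (n : ℕ) (k x : ℝ) : HasDerivAt (lag n k) (lagDeriv n k x) x := by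
  rw [show lag n k = fun t => ∑ i ∈ range (n + 1), lagCoeff n k i * t ^ i from
    funext (lag_eq_sum_lagCoeff n k)]
  exact HasDerivAt.fun_sum fun i _ => (hasDerivAt_pow i x).const_mul _

-- both sides are `∏ j ∈ range (N + 1), (a + j)`
lemma mul_prod_range_add_one_add {R : Type*} [CommRing R] (a : R) (N : ℕ) :
    a * ∏ j ∈ range N, (a + 1 + (j : R)) = (a + N) * ∏ j ∈ range N, (a + (j : R)) := by
  have h : ∏ j ∈ range (N + 1), (a + (j : R)) = (∏ j ∈ range N, (a + 1 + (j : R))) * a := by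
    rw [prod_range_succ']
    congr 1
    · exact prod_congr rfl fun j _ => by push_cast; ring
    · simp
  linear_combination h.symm.trans (prod_range_succ (fun j => a + (j : R)) N)

lemma lagCoeff_succ_sub_lagCoeff (k : ℝ) (i M : ℕ) :
    lagCoeff (i + (M + 1)) (k + 1) i - lagCoeff (i + (M + 1)) k i
      = -(((i : ℝ) + 1) * lagCoeff (i + (M + 1)) k (i + 1)) := by
  unfold lagCoeff
  rw [Nat.add_sub_cancel_left, show i + (M + 1) - (i + 1) = M by omega]
  have h1 : ∏ j ∈ range (M + 1), (k + 1 + (i : ℝ) + 1 + (j : ℝ))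
      = (∏ j ∈ range M, (k + ((i : ℝ) + 1) + 1 + (j : ℝ))) * (k + i + 1 + 1 + M) := by
    rw [prod_range_succ]
    congr 1
    · exact prod_congr rfl fun j _ => by ring
    · ring
  have h2 : ∏ j ∈ range (M + 1), (k + (i : ℝ) + 1 + (j : ℝ))
      = (∏ j ∈ range M, (k + ((i : ℝ) + 1) + 1 + (j : ℝ))) * (k + i + 1) := by
    rw [prod_range_succ']
    congr 1
    · exact prod_congr rfl fun j _ => by push_cast; ring
    · simp
  rw [h1, h2, pow_succ, Nat.factorial_succ M, Nat.factorial_succ i]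
  push_cast
  have hM : (Nat.factorial M : ℝ) ≠ 0 := by positivity
  have hi : (Nat.factorial i : ℝ) ≠ 0 := by positivity
  field_simp
  ring

lemma add_mul_lagCoeff_succ (k : ℝ) (i N : ℕ) :
    (k + 1 + i) * lagCoeff (i + N) (k + 1) i = (k + ((i : ℝ) + N) + 1) * lagCoeff (i + N) k i := by
  unfold lagCoeff
  rw [Nat.add_sub_cancel_left]
  have h := mul_prod_range_add_one_add (k + i + 1) N
  rw [show ∏ j ∈ range N, (k + (i : ℝ) + 1 + 1 + (j : ℝ))
      = ∏ j ∈ range N, (k + 1 + (i : ℝ) + 1 + (j : ℝ)) from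
    prod_congr rfl fun j _ => by ring] at h
  field_simp
  linear_combination h

lemma lag_succ_sub_lag (n : ℕ) (k t : ℝ) : lag n (k + 1) t - lag n k t = -lagDeriv n k t := by
  rw [lag_eq_sum_lagCoeff, lag_eq_sum_lagCoeff, lagDeriv, ← sum_sub_distrib, sum_range_succ,
    sum_range_succ']
  have htop : lagCoeff n (k + 1) n = lagCoeff n k n := by simp [lagCoeff]
  simp only [htop, sub_self, add_zero, Nat.cast_zero, zero_mul, mul_zero, Nat.add_sub_cancel,
    ← sum_neg_distrib, ← sub_mul]
  refine sum_congr rfl fun i hi => ?_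
  obtain ⟨M, rfl⟩ : ∃ M, n = i + (M + 1) := ⟨n - i - 1, by grind⟩
  push_cast
  linear_combination t ^ i * lagCoeff_succ_sub_lagCoeff k i M

lemma mul_lagDeriv_add_mul_lag (n : ℕ) (k t : ℝ) :
    t * lagDeriv n (k + 1) t + (k + 1) * lag n (k + 1) t = (k + n + 1) * lag n k t := by
  rw [lag_eq_sum_lagCoeff, lag_eq_sum_lagCoeff, lagDeriv, mul_sum, mul_sum, mul_sum,
    ← sum_add_distrib]
  refine sum_congr rfl fun i hi => ?_
  obtain ⟨N, rfl⟩ : ∃ N, n = i + N := ⟨n - i, by grind⟩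
  have hpow : t * ((i : ℝ) * t ^ (i - 1)) = i * t ^ i := by
    rcases i with _ | i
    · simp
    · rw [Nat.add_sub_cancel, pow_succ]; ring
  push_cast
  linear_combination t ^ i * add_mul_lagCoeff_succ k i N + lagCoeff (i + N) (k + 1) i * hpow

lemma hasDerivAt_xi (k : ℝ) (m : ℕ) (x : ℝ) :
    HasDerivAt (xi k m) (xi (k + 1) m x - xi k m x) x := by
  refine ((hasDerivAt_lag m k (-x)).comp x (hasDerivAt_neg x)).congr_deriv ?_
  simp only [xi]
  linear_combination -lag_succ_sub_lag m k (-x)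

lemma mul_deriv_xi_add_mul_xi (k : ℝ) (m : ℕ) (x : ℝ) :
    x * (xi (k + 1 + 1) m x - xi (k + 1) m x) + (k + 1) * xi (k + 1) m x
      = (k + m + 1) * xi k m x := by
  simp only [xi]
  linear_combination mul_lagDeriv_add_mul_lag m k (-x) + x * lag_succ_sub_lag m (k + 1) (-x)

/-- Isospectral factorization underlying the L1 family:
B^I ∘ A^I + (k+m+1) equals the Laguerre operator, wherever xi_{k,m}(x) ≠ 0. -/
theorem L1_isospectral_factorization (k : ℝ) (m : ℕ) (y : ℝ → ℝ) (hy : ContDiff ℝ 2 y)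
    (x : ℝ) (hx : xi k m x ≠ 0) :
    (x * deriv (fun t => xi k m t * deriv y t - xi (k + 1) m t * y t) x +
        (1 + k) * (xi k m x * deriv y x - xi (k + 1) m x * y x)) / xi k m x +
      (k + (m : ℝ) + 1) * y x
      = x * deriv (deriv y) x + (k + 1 - x) * deriv y x := by
  have hA : HasDerivAt (fun t => xi k m t * deriv y t - xi (k + 1) m t * y t)
      ((xi (k + 1) m x - xi k m x) * deriv y x + xi k m x * deriv (deriv y) x
        - ((xi (k + 1 + 1) m x - xi (k + 1) m x) * y x + xi (k + 1) m x * deriv y x)) x :=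
    ((hasDerivAt_xi k m x).mul (hy.differentiable_deriv_two x).hasDerivAt).sub
      ((hasDerivAt_xi (k + 1) m x).mul (hy.differentiable two_ne_zero x).hasDerivAt)
  rw [hA.deriv]
  field_simp
  linear_combination (-(y x)) * mul_deriv_xi_add_mul_xi k m x
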